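/- arXiv:1903.01845 — 6 statements merged into one kernel-verified Lean document; each statement's English description precedes it below -/
import Mathlib

section
/- Let R be a finite local ring of odd characteristic with maximal ideal M, and let β be the bilinear form on R² defined by β((x₁,x₂),(y₁,y₂)) = x₁y₁ − x₂y₂. Then the largest possible cardinality of a unimodular orthogonal set in R² with respect to β is |R| − |M|. -/
open IsLocalRing Finset

/-! The diagonal `{(u, u) | u ∈ Rˣ}` is a unimodular orthogonal set with `|R| - |M|` elements.

Conversely, let `S` have at least three elements and let `x ∈ S`. If `x₁² - x₂²` were a unit,
two further elements `y, z` of `S` would satisfy `y₁z₁ = y₂z₂ = 0`, so up to order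
`y = (unit, 0)` and `z = (0, unit)`, and `x ⊥ y, z` would force `x = 0`. Hence `x₁² - x₂² ∈ M`,
and since one of `x₁, x₂` is a unit, both are. Now any two elements `x, y` of `S` with `x₂ = y₂`
coincide: for a third element `z`, `x₁z₁ = x₂z₂ = y₁z₁` and `z₁` is a unit. So `x ↦ x₂` embeds
`S` into `Rˣ`. Sets with at most two elements are covered by `|Rˣ| ≥ 2`, as `-1 ≠ 1` in odd
characteristic. -/

theorem Units.ncard_setOf_isUnit (M : Type*) [Monoid M] :
    {x : M | IsUnit x}.ncard = Nat.card Mˣ :=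
  Set.ncard_range_of_injective Units.val_injective

theorem Units.one_lt_card_of_ringChar_ne_two {R : Type*} [Ring R] [Nontrivial R] [Finite R]
    (hR : ringChar R ≠ 2) : 1 < Nat.card Rˣ := by
  have : Nontrivial Rˣ := ⟨-1, 1, fun h => Ring.neg_one_ne_one_of_char_ne_two hR congr(($h : R))⟩
  exact Finite.one_lt_card

theorem Finset.exists_mem_ne_ne {α : Type*} {s : Finset α} (hs : 2 < #s) (a b : α) :
    ∃ c ∈ s, c ≠ a ∧ c ≠ b := by
  classical
  have := s.pred_card_le_card_erase (a := a)
  obtain ⟨c, hc, hcb⟩ := (s.erase a).exists_mem_ne (by omega) b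
  exact ⟨c, mem_of_mem_erase hc, ne_of_mem_erase hc, hcb⟩

section LocalRing

variable {R : Type*} [CommRing R] [IsLocalRing R]

theorem IsLocalRing.card_units_add_card_maximalIdeal [Finite R] :
    Nat.card Rˣ + Nat.card (maximalIdeal R) = Nat.card R := by
  have hcompl : (maximalIdeal R : Set R)ᶜ = {x | IsUnit x} := by
    ext x; simp [mem_maximalIdeal, mem_nonunits_iff]
  rw [← Units.ncard_setOf_isUnit, ← hcompl, add_comm,
    ← Set.ncard_add_ncard_compl (maximalIdeal R : Set R)]
  exact congrArg (· + _) (Nat.card_coe_set_eq _)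

theorem IsLocalRing.isUnit_or_isUnit_of_span_pair_eq_top {x y : R}
    (h : Ideal.span {x, y} = ⊤) : IsUnit x ∨ IsUnit y := by
  obtain ⟨a, b, hab⟩ := Ideal.mem_span_pair.mp (h ▸ Submodule.mem_top : (1 : R) ∈ _)
  exact (isUnit_or_isUnit_of_add_one hab).imp isUnit_of_mul_isUnit_right
    isUnit_of_mul_isUnit_right

theorem IsLocalRing.isUnit_of_not_isUnit_mul_self_sub_mul_self {u v : R} (hu : IsUnit u)
    (h : ¬ IsUnit (u * u - v * v)) : IsUnit v := by
  have : IsUnit (u * u - v * v + v * v) := by simpa using hu.mul hu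
  exact isUnit_of_mul_isUnit_left ((isUnit_or_isUnit_of_isUnit_add this).resolve_left h)

theorem eq_zero_of_orthogonal_of_mul_eq_zero {x y z : R × R} (hy : Ideal.span {y.1, y.2} = ⊤)
    (hz : Ideal.span {z.1, z.2} = ⊤) (hyz₁ : y.1 * z.1 = 0) (hyz₂ : y.2 * z.2 = 0)
    (hxy : x.1 * y.1 = x.2 * y.2) (hxz : x.1 * z.1 = x.2 * z.2) : x = 0 := by
  wlog hy₁ : IsUnit y.1 generalizing x y z
  · have hy₂ := (isUnit_or_isUnit_of_span_pair_eq_top hy).resolve_left hy₁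
    have := this (x := x.swap) (y := y.swap) (z := z.swap) (by rwa [Set.pair_comm])
      (by rwa [Set.pair_comm]) hyz₂ hyz₁ hxy.symm hxz.symm hy₂
    simpa using congr(Prod.swap $this)
  have hz₁ : z.1 = 0 := hy₁.mul_right_eq_zero.mp hyz₁
  have hz₂ : IsUnit z.2 := (isUnit_or_isUnit_of_span_pair_eq_top hz).resolve_left
    (by simp [hz₁])
  have hy₂ : y.2 = 0 := hz₂.mul_left_eq_zero.mp hyz₂
  ext
  · exact hy₁.mul_left_eq_zero.mp (by simpa [hy₂] using hxy)
  · exact hz₂.mul_left_eq_zero.mp (by simpa [hz₁] using hxz.symm)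

theorem not_isUnit_of_orthogonal {x y z : R × R} (hx : Ideal.span {x.1, x.2} = ⊤)
    (hy : Ideal.span {y.1, y.2} = ⊤) (hz : Ideal.span {z.1, z.2} = ⊤)
    (hxy : x.1 * y.1 - x.2 * y.2 = 0) (hxz : x.1 * z.1 - x.2 * z.2 = 0)
    (hyz : y.1 * z.1 - y.2 * z.2 = 0) : ¬ IsUnit (x.1 * x.1 - x.2 * x.2) := by
  intro hQ
  have hyz₁ : y.1 * z.1 = 0 := hQ.mul_right_eq_zero.mp <| by
    linear_combination (x.1 * z.1) * hxy + (x.2 * y.2) * hxz - (x.2 * x.2) * hyz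
  have hyz₂ : y.2 * z.2 = 0 := hQ.mul_right_eq_zero.mp <| by
    linear_combination (x.1 * z.1) * hxy + (x.2 * y.2) * hxz - (x.1 * x.1) * hyz
  have hx₀ := eq_zero_of_orthogonal_of_mul_eq_zero hy hz hyz₁ hyz₂ (sub_eq_zero.mp hxy)
    (sub_eq_zero.mp hxz)
  simp [hx₀] at hx

theorem isUnit_fst_and_snd_of_not_isUnit {x : R × R} (hx : Ideal.span {x.1, x.2} = ⊤)
    (hQ : ¬ IsUnit (x.1 * x.1 - x.2 * x.2)) : IsUnit x.1 ∧ IsUnit x.2 := by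
  rcases isUnit_or_isUnit_of_span_pair_eq_top hx with h₁ | h₂
  · exact ⟨h₁, isUnit_of_not_isUnit_mul_self_sub_mul_self h₁ hQ⟩
  · refine ⟨isUnit_of_not_isUnit_mul_self_sub_mul_self h₂ fun h => hQ ?_, h₂⟩
    simpa using h.neg

section Orthogonal

variable {S : Finset (R × R)} (hS₁ : ∀ v ∈ S, Ideal.span {v.1, v.2} = ⊤)
  (hS₂ : ∀ x ∈ S, ∀ y ∈ S, x ≠ y → x.1 * y.1 - x.2 * y.2 = 0)
include hS₁ hS₂

theorem isUnit_fst_and_snd_of_two_lt_card (hS : 2 < #S) {x : R × R} (hx : x ∈ S) :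
    IsUnit x.1 ∧ IsUnit x.2 := by
  obtain ⟨y, hy, hyx⟩ := S.exists_mem_ne (by omega) x
  obtain ⟨z, hz, hzx, hzy⟩ := S.exists_mem_ne_ne hS x y
  exact isUnit_fst_and_snd_of_not_isUnit (hS₁ x hx) <| not_isUnit_of_orthogonal (hS₁ x hx)
    (hS₁ y hy) (hS₁ z hz) (hS₂ x hx y hy hyx.symm) (hS₂ x hx z hz hzx.symm)
    (hS₂ y hy z hz hzy.symm)

theorem injOn_snd_of_two_lt_card (hS : 2 < #S) : Set.InjOn Prod.snd (S : Set (R × R)) := by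
  intro x hx y hy hxy
  by_contra hne
  obtain ⟨z, hz, hzx, hzy⟩ := S.exists_mem_ne_ne hS x y
  have hz₁ := (isUnit_fst_and_snd_of_two_lt_card hS₁ hS₂ hS hz).1
  have hxz := hS₂ x hx z hz hzx.symm
  have hyz := hS₂ y hy z hz hzy.symm
  refine hne (Prod.ext (hz₁.mul_left_cancel ?_) hxy)
  linear_combination hxz - hyz + z.2 * hxy

theorem card_le_card_units [Finite R] (hR : ringChar R ≠ 2) : #S ≤ Nat.card Rˣ := by
  by_cases hS : 2 < #S
  · rw [← Units.ncard_setOf_isUnit, ← Set.ncard_coe_finset]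
    exact Set.ncard_le_ncard_of_injOn Prod.snd
      (fun x hx => (isUnit_fst_and_snd_of_two_lt_card hS₁ hS₂ hS hx).2)
      (injOn_snd_of_two_lt_card hS₁ hS₂ hS) (Set.toFinite _)
  · have := Units.one_lt_card_of_ringChar_ne_two hR
    omega

end Orthogonal

end LocalRing

theorem exists_unimodular_orthogonal_card_eq_card_units (R : Type*) [CommRing R] [Finite R] :
    ∃ S : Finset (R × R), (∀ v ∈ S, Ideal.span {v.1, v.2} = ⊤) ∧
      (∀ x ∈ S, ∀ y ∈ S, x ≠ y → x.1 * y.1 - x.2 * y.2 = 0) ∧ #S = Nat.card Rˣ := by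
  classical
  have := Fintype.ofFinite R
  refine ⟨univ.map ⟨fun u : Rˣ => ((u : R), (u : R)), fun u v h => Units.ext congr($h.1)⟩,
    ?_, ?_, by simp [Nat.card_eq_fintype_card]⟩
  · simp only [mem_map, mem_univ, true_and, forall_exists_index]
    rintro _ u rfl
    exact Ideal.eq_top_of_isUnit_mem _ (Ideal.subset_span (Set.mem_insert _ _)) u.isUnit
  · simp only [mem_map, mem_univ, true_and, forall_exists_index]
    rintro _ u rfl _ v rfl -
    exact sub_self _

/-- For a finite local ring `R` of odd characteristic with maximal ideal `M`
and the bilinear form `β((x₁,x₂),(y₁,y₂)) = x₁y₁ - x₂y₂` on `R²`, the largest possible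
cardinality of a unimodular orthogonal set is `|R| - |M|`. -/
theorem stmt_2 (R : Type*) [CommRing R] [IsLocalRing R] [Fintype R]
    (hchar : Odd (ringChar R)) :
    IsGreatest {k : ℕ | ∃ S : Finset (R × R),
        (∀ v ∈ S, Ideal.span {v.1, v.2} = ⊤) ∧
        (∀ x ∈ S, ∀ y ∈ S, x ≠ y → x.1 * y.1 - x.2 * y.2 = 0) ∧
        S.card = k}
      (Fintype.card R - Nat.card (IsLocalRing.maximalIdeal R)) := by
  have hcard : Fintype.card R - Nat.card (maximalIdeal R) = Nat.card Rˣ := by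
    have := card_units_add_card_maximalIdeal (R := R)
    rw [Nat.card_eq_fintype_card (α := R)] at this
    omega
  rw [hcard]
  refine ⟨exists_unimodular_orthogonal_card_eq_card_units R, ?_⟩
  rintro k ⟨S, hS₁, hS₂, rfl⟩
  exact card_le_card_units hS₁ hS₂ (hchar.ne_two_of_dvd_nat dvd_rfl)
end

section
/- Let R be a finite local ring of odd characteristic, let z be a unit of R that is not a square in R, and let β be the bilinear form on R² defined by β((x₁,x₂),(y₁,y₂)) = x₁y₁ − z·x₂y₂. Then the largest possible cardinality of a unimodular orthogonal set in R² with respect to β is 2. -/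
lemma span_pair_eq_top_iff {R : Type*} [CommRing R] [IsLocalRing R] (a b : R) :
    Ideal.span {a, b} = ⊤ ↔ IsUnit a ∨ IsUnit b := by
  constructor
  · intro h
    by_contra hc
    push_neg at hc
    have hle : Ideal.span {a, b} ≤ IsLocalRing.maximalIdeal R := by
      rw [Ideal.span_le]
      intro x hx
      rcases hx with rfl | hx
      · exact hc.1
      · rcases hx with rfl
        exact hc.2
    exact (IsLocalRing.maximalIdeal.isMaximal R).ne_top (top_le_iff.mp (h ▸ hle))
  · rintro (h | h)
    · exact Ideal.eq_top_of_isUnit_mem _ (Ideal.subset_span (by simp)) h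
    · exact Ideal.eq_top_of_isUnit_mem _ (Ideal.subset_span (by simp)) h

/-- For a finite local ring `R` of odd characteristic, a non-square unit `z`
of `R`, and the bilinear form `β((x₁,x₂),(y₁,y₂)) = x₁y₁ - z·x₂y₂` on `R²`, the largest
possible cardinality of a unimodular orthogonal set is `2`. -/
theorem stmt_3 (R : Type*) [CommRing R] [IsLocalRing R] [Fintype R]
    (hchar : Odd (ringChar R))
    (z : R) (hz : IsUnit z) (hzsq : ¬ ∃ r : R, r ^ 2 = z) :
    IsGreatest {k : ℕ | ∃ S : Finset (R × R),
        (∀ v ∈ S, Ideal.span {v.1, v.2} = ⊤) ∧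
        (∀ x ∈ S, ∀ y ∈ S, x ≠ y → x.1 * y.1 - z * (x.2 * y.2) = 0) ∧
        S.card = k}
      2 := by
  have hnt : (1 : R) ≠ 0 := by
    intro h
    have : ∀ a b : R, a = b := fun a b => by
      calc a = a * 1 := by ring
        _ = a * 0 := by rw [h]
        _ = b * 0 := by ring
        _ = b * 1 := by rw [h]
        _ = b := by ring
    exact hzsq ⟨0, this _ _⟩
  classical
  constructor
  · -- membership: {(1,0),(0,1)}
    refine ⟨{((1 : R), (0 : R)), ((0 : R), (1 : R))}, ?_, ?_, ?_⟩
    · intro v hv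
      rcases Finset.mem_insert.mp hv with rfl | hv
      · exact (span_pair_eq_top_iff _ _).mpr (Or.inl isUnit_one)
      · rcases Finset.mem_singleton.mp hv with rfl
        exact (span_pair_eq_top_iff _ _).mpr (Or.inr isUnit_one)
    · intro x hx y hy hxy
      rcases Finset.mem_insert.mp hx with rfl | hx <;>
        [skip; rcases Finset.mem_singleton.mp hx with rfl] <;>
      rcases Finset.mem_insert.mp hy with rfl | hy <;>
        [skip; rcases Finset.mem_singleton.mp hy with rfl; skip;
          rcases Finset.mem_singleton.mp hy with rfl] <;>
      simp_all <;> ring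
    · rw [Finset.card_insert_of_notMem (by simp [hnt, Prod.ext_iff]),
        Finset.card_singleton]
  · -- upper bound
    rintro k ⟨S, hU, hO, hcard⟩
    by_contra hk
    push_neg at hk
    have h3 : 2 < S.card := hcard ▸ hk
    rw [Finset.two_lt_card_iff] at h3
    obtain ⟨x, y, w, hxS, hyS, hwS, hxy, hxw, hyw⟩ := h3
    -- characterize vectors orthogonal to x
    have key : ∀ v ∈ S, v ≠ x → ∃ s : R, IsUnit s ∧ v.1 = s * (z * x.2) ∧ v.2 = s * x.1 := by
      intro v hvS hvx
      have horth : v.1 * x.1 - z * (v.2 * x.2) = 0 := hO v hvS x hxS hvx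
      have hx12 := (span_pair_eq_top_iff x.1 x.2).mp (hU x hxS)
      have : ∃ s : R, v.1 = s * (z * x.2) ∧ v.2 = s * x.1 := by
        rcases hx12 with hx1 | hx2
        · obtain ⟨u, hu⟩ := hx1.exists_left_inv
          refine ⟨u * v.2, ?_, ?_⟩
          · linear_combination u * horth - v.1 * hu
          · linear_combination -v.2 * hu
        · obtain ⟨u, hu⟩ := hx2.exists_left_inv
          obtain ⟨t, ht⟩ := hz.exists_left_inv
          refine ⟨u * t * v.1, ?_, ?_⟩
          · linear_combination (-v.1 * t * z) * hu + (-v.1) * ht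
          · linear_combination (-u * t) * horth + (-v.2 * t * z) * hu + (-v.2) * ht
      obtain ⟨s, hs1, hs2⟩ := this
      refine ⟨s, ?_, hs1, hs2⟩
      rcases (span_pair_eq_top_iff v.1 v.2).mp (hU v hvS) with hv1 | hv2
      · rw [hs1] at hv1
        exact isUnit_of_mul_isUnit_left hv1
      · rw [hs2] at hv2
        exact isUnit_of_mul_isUnit_left hv2
    obtain ⟨sy, hsy, hy1, hy2⟩ := key y hyS hxy.symm
    obtain ⟨sw, hsw, hw1, hw2⟩ := key w hwS hxw.symm
    have horth : y.1 * w.1 - z * (y.2 * w.2) = 0 := hO y hyS w hwS hyw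
    have hfac : sy * sw * z * (z * x.2 ^ 2 - x.1 ^ 2) = 0 := by
      rw [hy1, hy2, hw1, hw2] at horth
      linear_combination horth
    have hu : IsUnit (sy * sw * z) := (hsy.mul hsw).mul hz
    have heq : x.1 ^ 2 = z * x.2 ^ 2 := by
      have h0 := hu.mul_right_eq_zero.mp hfac
      linear_combination -h0
    -- x.2 must be a unit
    have hx2 : IsUnit x.2 := by
      rcases (span_pair_eq_top_iff x.1 x.2).mp (hU x hxS) with hx1 | hx2
      · have : IsUnit (z * x.2 ^ 2) := heq ▸ hx1.pow 2
        have : IsUnit (x.2 ^ 2) := isUnit_of_mul_isUnit_right this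
        exact (isUnit_pow_iff (two_ne_zero)).mp this
      · exact hx2
    obtain ⟨u, hu2⟩ := hx2.exists_left_inv
    exact hzsq ⟨x.1 * u, by linear_combination u ^ 2 * heq + z * (u * x.2 + 1) * hu2⟩
end

section
/- Let R be a finite local ring of odd characteristic, let z be a unit of R that is not a square in R, and let β be the bilinear form on R² defined by β((x₁,x₂),(y₁,y₂)) = x₁y₁ − z·x₂y₂. Then every unimodular orthogonal set in R² with respect to β has at most 2 elements. -/
/-- For a finite local ring `R` of odd characteristic, a non-square unit `z`,
and the bilinear form `β((x₁,x₂),(y₁,y₂)) = x₁y₁ - z·x₂y₂`, every unimodular orthogonal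
set in `R²` has at most 2 elements. -/
theorem stmt_5 (R : Type*) [CommRing R] [IsLocalRing R] [Fintype R]
    (hchar : Odd (ringChar R))
    (z : R) (hz : IsUnit z) (hzsq : ¬ ∃ r : R, r ^ 2 = z)
    (S : Set (R × R))
    (huni : ∀ v ∈ S, Ideal.span {v.1, v.2} = (⊤ : Ideal R))
    (horth : ∀ x ∈ S, ∀ y ∈ S, x ≠ y → x.1 * y.1 - z * (x.2 * y.2) = 0) :
    S.ncard ≤ 2 := by
  by_contra hcard
  push_neg at hcard
  obtain ⟨x, hx, y, hy, w, hw, hxy, hxw, hyw⟩ :=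
    (Set.two_lt_ncard S.toFinite).mp hcard
  -- unimodularity: one coordinate is a unit
  have unim : ∀ v ∈ S, IsUnit v.1 ∨ IsUnit v.2 := by
    intro v hv
    by_contra h
    push_neg at h
    have hle : Ideal.span {v.1, v.2} ≤ IsLocalRing.maximalIdeal R := by
      rw [Ideal.span_le]
      intro a ha
      rcases ha with rfl | ha
      · exact (IsLocalRing.mem_maximalIdeal _).mpr h.1
      · rcases ha with rfl
        exact (IsLocalRing.mem_maximalIdeal _).mpr h.2
    rw [huni v hv] at hle
    exact (IsLocalRing.maximalIdeal.isMaximal R).ne_top (top_le_iff.mp hle)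
  have e1 := horth x hx y hy hxy
  have e2 := horth x hx w hw hxw
  have e3 := horth y hy w hw hyw
  have key : z * (y.2 * w.2) * (x.1 ^ 2 - z * x.2 ^ 2) = 0 := by
    linear_combination (-x.1 ^ 2) * e3 + (x.1 * w.1) * e1 + (z * x.2 * y.2) * e2
  by_cases hx1 : IsUnit x.1
  · -- Case A: x.1 is a unit; then y.2, w.2 are units
    have hv2 : ∀ v ∈ S, v ≠ x → IsUnit v.2 := by
      intro v hv hvx
      by_contra h
      have e := horth x hx v hv (Ne.symm hvx)
      rw [sub_eq_zero] at e
      have hnu : ¬ IsUnit (x.1 * v.1) := by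
        rw [e]
        intro hu
        exact h (isUnit_of_mul_isUnit_right (isUnit_of_mul_isUnit_right hu))
      have hv1 : ¬ IsUnit v.1 := fun h' => hnu (hx1.mul h')
      rcases unim v hv with h' | h' <;> [exact hv1 h'; exact h h']
    have hy2 := hv2 y hy (Ne.symm hxy)
    have hw2 := hv2 w hw (Ne.symm hxw)
    have hu : IsUnit (z * (y.2 * w.2)) := hz.mul (hy2.mul hw2)
    have k2 : x.1 ^ 2 - z * x.2 ^ 2 = 0 := (hu.mul_right_eq_zero).mp key
    rw [sub_eq_zero] at k2
    have hx2u : IsUnit x.2 := by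
      have h1 : IsUnit (z * x.2 ^ 2) := k2 ▸ (hx1.pow 2)
      exact (isUnit_pow_iff two_ne_zero).mp (isUnit_of_mul_isUnit_right h1)
    refine hzsq ⟨x.1 * ↑hx2u.unit⁻¹, ?_⟩
    rw [mul_pow, k2, mul_assoc, ← mul_pow, hx2u.mul_val_inv, one_pow, mul_one]
  · -- Case B: x.1 is not a unit, so x.2 is
    have hx2u : IsUnit x.2 := (unim x hx).resolve_left hx1
    have hv12 : ∀ v ∈ S, v ≠ x → IsUnit v.1 ∧ ¬ IsUnit v.2 := by
      intro v hv hvx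
      have e := horth x hx v hv (Ne.symm hvx)
      rw [sub_eq_zero] at e
      have hnu : ¬ IsUnit (z * (x.2 * v.2)) := by
        rw [← e]
        intro hu
        exact hx1 (isUnit_of_mul_isUnit_left hu)
      have hv2 : ¬ IsUnit v.2 := fun h => hnu (hz.mul (hx2u.mul h))
      exact ⟨(unim v hv).resolve_right hv2, hv2⟩
    obtain ⟨hy1, hy2⟩ := hv12 y hy (Ne.symm hxy)
    obtain ⟨hw1, _⟩ := hv12 w hw (Ne.symm hxw)
    rw [sub_eq_zero] at e3
    have : IsUnit (z * (y.2 * w.2)) := e3 ▸ (hy1.mul hw1)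
    exact hy2 (isUnit_of_mul_isUnit_left (isUnit_of_mul_isUnit_right this))
end

section
/- Let R be a finite local ring of odd characteristic with maximal ideal M, and let β be the bilinear form on R² defined by β((x₁,x₂),(y₁,y₂)) = x₁y₁ − x₂y₂. Then every unimodular orthogonal set in R² with respect to β has at most |R| − |M| elements. -/
/-!
Since `2` is a unit, the coordinates `u = x₁ + x₂`, `w = x₁ - x₂` turn `β` into the hyperbolic
form `u w' + w u'` (up to the factor `2`), and a unimodular vector has `u` or `w` a unit.
For three pairwise orthogonal vectors, two units `u_x, u_y` give `2 u_x u_y w_z = 0`, so `w_z = 0`;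
then `u_z` is a unit, and orthogonality to `z` kills `w` on the whole set. Hence an orthogonal set
with more than two elements lies on one of the isotropic lines `w = 0`, `u = 0`, where the
remaining coordinate is an injective map into the units, of which there are `|R| - |M|`.
-/

open IsLocalRing

lemma isUnit_two_of_odd_ringChar {R : Type*} [CommRing R] (h : Odd (ringChar R)) :
    IsUnit (2 : R) := by
  obtain ⟨k, hk⟩ := h
  have hchar : ((2 * k + 1 : ℕ) : R) = 0 := hk ▸ ringChar.Nat.cast_ringChar
  refine .of_mul_eq_one ((k : R) + 1) ?_
  push_cast at hchar
  linear_combination hchar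

namespace IsLocalRing

variable {R : Type*} [CommRing R] [IsLocalRing R]

lemma isUnit_or_isUnit_of_span_pair_eq_top_s6 {a b : R} (h : Ideal.span {a, b} = ⊤) :
    IsUnit a ∨ IsUnit b := by
  have hone : (1 : R) ∈ Ideal.span {a, b} := h ▸ Submodule.mem_top
  obtain ⟨c, d, hcd⟩ := Ideal.mem_span_pair.mp hone
  exact (isUnit_or_isUnit_of_isUnit_add (hcd ▸ isUnit_one)).imp
    isUnit_of_mul_isUnit_right isUnit_of_mul_isUnit_right

lemma isUnit_add_or_isUnit_sub {a b : R} (h2 : IsUnit (2 : R)) (h : IsUnit a ∨ IsUnit b) :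
    IsUnit (a + b) ∨ IsUnit (a - b) := by
  rcases h with ha | hb
  · exact isUnit_or_isUnit_of_isUnit_add (a := a + b) (b := a - b) (by ring_nf; exact ha.mul h2)
  · refine (isUnit_or_isUnit_of_isUnit_add (a := a + b) (b := -(a - b)) ?_).imp id
      fun h => by simpa using h.neg
    ring_nf
    exact hb.mul h2

lemma ncard_setOf_isUnit [Finite R] :
    {x : R | IsUnit x}.ncard = Nat.card R - Nat.card (maximalIdeal R) := by
  have hcompl : {x : R | IsUnit x} = (maximalIdeal R : Set R)ᶜ := by
    ext x
    simp [mem_maximalIdeal, mem_nonunits_iff]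
  rw [hcompl, Set.ncard_compl, ← Nat.card_coe_set_eq]
  rfl

end IsLocalRing

lemma ncard_le_ncard_setOf_isUnit_of_forall_eq_zero {α R : Type*} [MonoidWithZero R] [Finite R]
    [Nontrivial R] {T : Set α} {f g : α → R} (hinj : Set.InjOn (fun x => (f x, g x)) T)
    (huni : ∀ x ∈ T, IsUnit (f x) ∨ IsUnit (g x)) (hg : ∀ x ∈ T, g x = 0) :
    T.ncard ≤ {x : R | IsUnit x}.ncard := by
  refine Set.ncard_le_ncard_of_injOn f
    (fun x hx => (huni x hx).resolve_right (hg x hx ▸ not_isUnit_zero)) ?_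
  intro x hx y hy hxy
  exact hinj hx hy (Prod.ext hxy ((hg x hx).trans (hg y hy).symm))

lemma two_le_ncard_setOf_isUnit {R : Type*} [CommRing R] [Finite R] [Nontrivial R]
    (h2 : IsUnit (2 : R)) : 2 ≤ {x : R | IsUnit x}.ncard := by
  have hne : (1 : R) ≠ -1 := fun h => h2.ne_zero (by linear_combination h)
  calc 2 = ({1, -1} : Set R).ncard := (Set.ncard_pair hne).symm
    _ ≤ _ := Set.ncard_le_ncard (by simp [Set.insert_subset_iff])

lemma injective_add_sub {R : Type*} [CommRing R] (h2 : IsUnit (2 : R)) :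
    Function.Injective (fun v : R × R => (v.1 + v.2, v.1 - v.2)) := by
  intro x y hxy
  simp only [Prod.mk.injEq] at hxy
  obtain ⟨hadd, hsub⟩ := hxy
  have hfst : 2 * (x.1 - y.1) = 0 := by linear_combination hadd + hsub
  have hsnd : 2 * (x.2 - y.2) = 0 := by linear_combination hadd - hsub
  exact Prod.ext (sub_eq_zero.mp (h2.mul_right_eq_zero.mp hfst))
    (sub_eq_zero.mp (h2.mul_right_eq_zero.mp hsnd))

def HyperbolicOrthogonal {α R : Type*} [CommRing R] (T : Set α) (f g : α → R) : Prop :=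
  ∀ x ∈ T, ∀ y ∈ T, x ≠ y → f x * g y + g x * f y = 0

namespace HyperbolicOrthogonal

variable {α R : Type*} [CommRing R] {T : Set α} {f g : α → R}

lemma symm (h : HyperbolicOrthogonal T f g) : HyperbolicOrthogonal T g f :=
  fun x hx y hy hxy => by linear_combination h x hx y hy hxy

lemma eq_zero_of_isUnit_of_isUnit (h : HyperbolicOrthogonal T f g) (h2 : IsUnit (2 : R))
    {x y z : α} (hx : x ∈ T) (hy : y ∈ T) (hz : z ∈ T) (hxy : x ≠ y) (hxz : x ≠ z) (hyz : y ≠ z)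
    (hfx : IsUnit (f x)) (hfy : IsUnit (f y)) : g z = 0 := by
  have key : (2 * (f x * f y)) * g z = 0 := by
    linear_combination f y * h x hx z hz hxz + f x * h y hy z hz hyz - f z * h x hx y hy hxy
  exact (h2.mul (hfx.mul hfy)).mul_right_eq_zero.mp key

lemma forall_eq_zero_of_eq_zero [Nontrivial R] (h : HyperbolicOrthogonal T f g)
    (huni : ∀ x ∈ T, IsUnit (f x) ∨ IsUnit (g x)) {z : α} (hz : z ∈ T) (hgz : g z = 0) :
    ∀ q ∈ T, g q = 0 := by
  have hfz : IsUnit (f z) := (huni z hz).resolve_right (hgz ▸ not_isUnit_zero)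
  intro q hq
  obtain rfl | hzq := eq_or_ne z q
  · exact hgz
  · have := h z hz q hq hzq
    rw [hgz, zero_mul, add_zero] at this
    exact hfz.mul_right_eq_zero.mp this

lemma forall_eq_zero_or_forall_eq_zero [Nontrivial R] (h : HyperbolicOrthogonal T f g)
    (h2 : IsUnit (2 : R)) (huni : ∀ x ∈ T, IsUnit (f x) ∨ IsUnit (g x)) (hT : 2 < T.ncard) :
    (∀ x ∈ T, g x = 0) ∨ (∀ x ∈ T, f x = 0) := by
  have hfin : T.Finite := Set.finite_of_ncard_pos (by omega)
  obtain ⟨x, y, z, hx, hy, hz, hxy, hxz, hyz⟩ := (Set.two_lt_ncard_iff hfin).mp hT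
  have huni' : ∀ x ∈ T, IsUnit (g x) ∨ IsUnit (f x) := fun x hx => (huni x hx).symm
  have hf {a b c} (ha : a ∈ T) (hb : b ∈ T) (hc : c ∈ T) (hab : a ≠ b) (hac : a ≠ c)
      (hbc : b ≠ c) (hfa : IsUnit (f a)) (hfb : IsUnit (f b)) : ∀ q ∈ T, g q = 0 :=
    h.forall_eq_zero_of_eq_zero huni hc
      (h.eq_zero_of_isUnit_of_isUnit h2 ha hb hc hab hac hbc hfa hfb)
  have hg {a b c} (ha : a ∈ T) (hb : b ∈ T) (hc : c ∈ T) (hab : a ≠ b) (hac : a ≠ c)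
      (hbc : b ≠ c) (hga : IsUnit (g a)) (hgb : IsUnit (g b)) : ∀ q ∈ T, f q = 0 :=
    h.symm.forall_eq_zero_of_eq_zero huni' hc
      (h.symm.eq_zero_of_isUnit_of_isUnit h2 ha hb hc hab hac hbc hga hgb)
  rcases huni x hx with hfx | hgx <;> rcases huni y hy with hfy | hgy
  · exact .inl (hf hx hy hz hxy hxz hyz hfx hfy)
  · rcases huni z hz with hfz | hgz
    · exact .inl (hf hx hz hy hxz hxy hyz.symm hfx hfz)
    · exact .inr (hg hy hz hx hyz hxy.symm hxz.symm hgy hgz)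
  · rcases huni z hz with hfz | hgz
    · exact .inl (hf hy hz hx hyz hxy.symm hxz.symm hfy hfz)
    · exact .inr (hg hx hz hy hxz hxy hyz.symm hgx hgz)
  · exact .inr (hg hx hy hz hxy hxz hyz hgx hgy)

end HyperbolicOrthogonal

/-- For a finite local ring `R` of odd characteristic with maximal ideal `M`
and the bilinear form `β((x₁,x₂),(y₁,y₂)) = x₁y₁ - x₂y₂`, every unimodular orthogonal set
in `R²` has at most `|R| - |M|` elements. -/
theorem stmt_6 (R : Type*) [CommRing R] [IsLocalRing R] [Fintype R]
    (hchar : Odd (ringChar R))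
    (S : Set (R × R))
    (huni : ∀ v ∈ S, Ideal.span {v.1, v.2} = (⊤ : Ideal R))
    (horth : ∀ x ∈ S, ∀ y ∈ S, x ≠ y → x.1 * y.1 - x.2 * y.2 = 0) :
    S.ncard ≤ Fintype.card R - Nat.card (IsLocalRing.maximalIdeal R) := by
  have h2 : IsUnit (2 : R) := isUnit_two_of_odd_ringChar hchar
  rw [← Nat.card_eq_fintype_card, ← ncard_setOf_isUnit]
  have hhyp : HyperbolicOrthogonal S (fun v => v.1 + v.2) (fun v => v.1 - v.2) :=
    fun x hx y hy hxy => by linear_combination 2 * horth x hx y hy hxy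
  have huni' : ∀ v ∈ S, IsUnit (v.1 + v.2) ∨ IsUnit (v.1 - v.2) := fun v hv =>
    isUnit_add_or_isUnit_sub h2 (isUnit_or_isUnit_of_span_pair_eq_top_s6 (huni v hv))
  have hinj := (injective_add_sub h2).injOn (s := S)
  rcases le_or_gt S.ncard 2 with hS | hS
  · exact hS.trans (two_le_ncard_setOf_isUnit h2)
  rcases hhyp.forall_eq_zero_or_forall_eq_zero h2 huni' hS with hw | hu
  · exact ncard_le_ncard_setOf_isUnit_of_forall_eq_zero hinj huni' hw
  · exact ncard_le_ncard_setOf_isUnit_of_forall_eq_zero (Prod.swap_injective.comp_injOn hinj)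
      (fun v hv => (huni' v hv).symm) hu
end

section
/- Let R be a finite local ring of odd characteristic, and let β be the bilinear form on R² defined by β((x₁,x₂),(y₁,y₂)) = x₁y₁ − x₂y₂. If S is a unimodular orthogonal set in R² with respect to β and |S| ≥ 3, then there exists u ∈ R with u² = 1 such that S ⊆ {(u·y, y) : y a unit of R}. -/
/-- For a finite local ring `R` of odd characteristic and the form
`β((x₁,x₂),(y₁,y₂)) = x₁y₁ - x₂y₂`, any unimodular orthogonal set `S` with `|S| ≥ 3`
is contained in `{(u·y, y) : y a unit}` for some `u` with `u² = 1`. -/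
theorem stmt_12 (R : Type*) [CommRing R] [IsLocalRing R] [Fintype R]
    (hchar : Odd (ringChar R))
    (S : Set (R × R))
    (huni : ∀ v ∈ S, Ideal.span {v.1, v.2} = (⊤ : Ideal R))
    (horth : ∀ x ∈ S, ∀ y ∈ S, x ≠ y → x.1 * y.1 - x.2 * y.2 = 0)
    (hcard : 3 ≤ S.ncard) :
    ∃ u : R, u ^ 2 = 1 ∧ S ⊆ {p : R × R | ∃ y : R, IsUnit y ∧ p = (u * y, y)} := by
  classical
  set m := IsLocalRing.maximalIdeal R with hm
  -- orthogonality as equality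
  have horth' : ∀ v ∈ S, ∀ w ∈ S, v ≠ w → v.1 * w.1 = v.2 * w.2 := by
    intro v hv w hw h
    exact sub_eq_zero.mp (horth v hv w hw h)
  -- unimodularity: not both coordinates in m
  have huni' : ∀ v ∈ S, v.1 ∈ m → v.2 ∈ m → False := by
    intro v hv h1 h2
    have hle : Ideal.span {v.1, v.2} ≤ m := by
      rw [Ideal.span_le]
      rintro a ha
      rcases ha with rfl | ha
      · exact h1
      · simp only [Set.mem_singleton_iff] at ha; subst ha; exact h2
    rw [huni v hv] at hle
    exact (IsLocalRing.maximalIdeal.isMaximal R).ne_top (top_le_iff.mp hle)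
  have hunit : ∀ a : R, a ∉ m → IsUnit a := by
    intro a ha
    by_contra h
    exact ha (IsLocalRing.mem_maximalIdeal a |>.mpr h)
  have hnunit : ∀ a : R, a ∈ m → ¬ IsUnit a := by
    intro a ha
    exact IsLocalRing.mem_maximalIdeal a |>.mp ha
  -- get three distinct elements
  obtain ⟨x, hx, y, hy, z, hz, hxy, hxz, hyz⟩ :=
    (Set.two_lt_ncard (S.toFinite)).mp (by omega)
  -- for each v, pick two other distinct elements of S
  have pick : ∀ v : R × R, ∃ w ∈ S, ∃ t ∈ S, w ≠ t ∧ w ≠ v ∧ t ≠ v := by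
    intro v
    by_cases h1 : v = x
    · subst h1; exact ⟨y, hy, z, hz, hyz, hxy.symm, hxz.symm⟩
    by_cases h2 : v = y
    · subst h2; exact ⟨x, hx, z, hz, hxz, hxy, hyz.symm⟩
    · exact ⟨x, hx, y, hy, hxy, fun h => h1 h.symm, fun h => h2 h.symm⟩
  -- every element has both coordinates units
  have hcoord : ∀ v ∈ S, v.1 ∉ m ∧ v.2 ∉ m := by
    intro v hv
    constructor
    · -- suppose v.1 ∈ m
      intro h1
      obtain ⟨w, hw, t, ht, hwt, hwv, htv⟩ := pick v
      have hv2 : v.2 ∉ m := fun h2 => huni' v hv h1 h2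
      have key : ∀ s ∈ S, s ≠ v → s.2 ∈ m := by
        intro s hs hsv
        have h := horth' v hv s hs (fun h => hsv h.symm)
        have : v.2 * s.2 ∈ m := h ▸ Ideal.mul_mem_right _ _ h1
        exact (Ideal.unit_mul_mem_iff_mem m (hunit _ hv2)).mp this
      have hw2 := key w hw hwv
      have ht2 := key t ht htv
      have hw1 : w.1 ∉ m := fun h => huni' w hw h hw2
      have h := horth' w hw t ht hwt
      have : w.1 * t.1 ∈ m := h ▸ Ideal.mul_mem_left _ _ ht2
      have ht1 : t.1 ∈ m := (Ideal.unit_mul_mem_iff_mem m (hunit _ hw1)).mp this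
      exact huni' t ht ht1 ht2
    · intro h2
      obtain ⟨w, hw, t, ht, hwt, hwv, htv⟩ := pick v
      have hv1 : v.1 ∉ m := fun h1 => huni' v hv h1 h2
      have key : ∀ s ∈ S, s ≠ v → s.1 ∈ m := by
        intro s hs hsv
        have h := horth' v hv s hs (fun h => hsv h.symm)
        have : v.1 * s.1 ∈ m := h.symm ▸ Ideal.mul_mem_right _ _ h2
        exact (Ideal.unit_mul_mem_iff_mem m (hunit _ hv1)).mp this
      have hw1 := key w hw hwv
      have ht1 := key t ht htv
      have hw2 : w.2 ∉ m := fun h => huni' w hw hw1 h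
      have h := horth' w hw t ht hwt
      have : w.2 * t.2 ∈ m := h.symm ▸ Ideal.mul_mem_left _ _ ht1
      have ht2 : t.2 ∈ m := (Ideal.unit_mul_mem_iff_mem m (hunit _ hw2)).mp this
      exact huni' t ht ht1 ht2
  have ux1 : IsUnit x.1 := hunit _ (hcoord x hx).1
  have ux2 : IsUnit x.2 := hunit _ (hcoord x hx).2
  have uy1 : IsUnit y.1 := hunit _ (hcoord y hy).1
  have uy2 : IsUnit y.2 := hunit _ (hcoord y hy).2
  have uz1 : IsUnit z.1 := hunit _ (hcoord z hz).1
  have uz2 : IsUnit z.2 := hunit _ (hcoord z hz).2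
  -- key relations
  have rxy : x.1 * y.1 = x.2 * y.2 := horth' x hx y hy hxy
  have rxz : x.1 * z.1 = x.2 * z.2 := horth' x hx z hz hxz
  have ryz : y.1 * z.1 = y.2 * z.2 := horth' y hy z hz hyz
  -- y.1 ^ 2 = y.2 ^ 2
  have hy2 : y.1 * y.1 = y.2 * y.2 := by
    have h1 : (x.1 * z.1) * (y.1 * y.1) = (x.2 * z.2) * (y.2 * y.2) := by
      calc (x.1 * z.1) * (y.1 * y.1) = (x.1 * y.1) * (y.1 * z.1) := by ring
        _ = (x.2 * y.2) * (y.2 * z.2) := by rw [rxy, ryz]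
        _ = (x.2 * z.2) * (y.2 * y.2) := by ring
    rw [rxz] at h1
    exact (ux2.mul uz2).mul_left_cancel h1
  -- define u
  set u := y.1 * ↑(uy2.unit⁻¹) with hu
  have huy : u * y.2 = y.1 := by
    rw [hu, mul_assoc]
    simp [IsUnit.val_inv_mul, uy2.unit_spec]
  refine ⟨u, ?_, ?_⟩
  · -- u ^ 2 = 1
    have : (y.2 * y.2) * (u * u) = (y.2 * y.2) * 1 := by
      calc (y.2 * y.2) * (u * u) = (u * y.2) * (u * y.2) := by ring
        _ = y.1 * y.1 := by rw [huy]
        _ = (y.2 * y.2) * 1 := by rw [hy2]; ring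
    have h := (uy2.mul uy2).mul_left_cancel this
    rw [pow_two]; exact h
  · intro v hv
    have hv2 : IsUnit v.2 := hunit _ (hcoord v hv).2
    refine ⟨v.2, hv2, ?_⟩
    have key : v.1 = u * v.2 := by
      by_cases hvy : v = y
      · subst hvy; exact huy.symm
      · have h := horth' v hv y hy hvy
        -- v.1 * y.1 = v.2 * y.2
        have h2 : y.2 * v.1 = y.2 * (u * v.2) := by
          have : y.1 * (y.2 * v.1) = y.1 * (y.2 * (u * v.2)) := by
            calc y.1 * (y.2 * v.1) = y.2 * (v.1 * y.1) := by ring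
              _ = y.2 * (v.2 * y.2) := by rw [h]
              _ = (y.2 * y.2) * v.2 := by ring
              _ = (y.1 * y.1) * v.2 := by rw [hy2]
              _ = y.1 * ((u * y.2) * v.2) := by rw [huy]; ring
              _ = y.1 * (y.2 * (u * v.2)) := by ring
          exact uy1.mul_left_cancel this
        exact uy2.mul_left_cancel h2
    exact Prod.ext key rfl
end

section
/- Let p be an odd prime, s a positive integer, R = ℤ/p^sℤ, and let β be the bilinear form on R² defined by β((x₁,x₂),(y₁,y₂)) = x₁y₁ − x₂y₂. If S is a unimodular orthogonal set in R² with respect to β and |S| ≥ 3, then S ⊆ {(x,x) : x a unit of R} or S ⊆ {(−x,x) : x a unit of R}. -/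
/-- For `R = ℤ/p^sℤ` with `p` an odd prime and `s ≥ 1`, and the form
`β((x₁,x₂),(y₁,y₂)) = x₁y₁ - x₂y₂`, any unimodular orthogonal set `S` in `R²` with
`|S| ≥ 3` is contained in `{(x,x) : x a unit}` or in `{(-x,x) : x a unit}`. -/
theorem stmt_16 (p s : ℕ) (hp : p.Prime) (hodd : Odd p) (hs : 0 < s)
    (S : Set (ZMod (p ^ s) × ZMod (p ^ s)))
    (huni : ∀ v ∈ S, Ideal.span {v.1, v.2} = (⊤ : Ideal (ZMod (p ^ s))))
    (horth : ∀ x ∈ S, ∀ y ∈ S, x ≠ y → x.1 * y.1 - x.2 * y.2 = 0)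
    (hcard : 3 ≤ S.ncard) :
    S ⊆ {q : ZMod (p ^ s) × ZMod (p ^ s) | ∃ x : ZMod (p ^ s), IsUnit x ∧ q = (x, x)} ∨
    S ⊆ {q : ZMod (p ^ s) × ZMod (p ^ s) | ∃ x : ZMod (p ^ s), IsUnit x ∧ q = (-x, x)} := by
  haveI : NeZero (p ^ s) := ⟨pow_ne_zero _ hp.pos.ne'⟩
  haveI : Fact (1 < p ^ s) := ⟨Nat.one_lt_pow hs.ne' hp.one_lt⟩
  -- characterization of units in ZMod (p^s)
  have huChar : ∀ x : ZMod (p ^ s), IsUnit x ↔ ¬ p ∣ x.val := by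
    intro x
    have h := ZMod.isUnit_iff_coprime x.val (p ^ s)
    rw [ZMod.natCast_rightInverse x] at h
    rw [h, Nat.coprime_pow_right_iff hs, Nat.coprime_comm, hp.coprime_iff_not_dvd]
  haveI : IsLocalRing (ZMod (p ^ s)) := by
    apply IsLocalRing.of_isUnit_or_isUnit_of_isUnit_add
    intro a b hab
    by_contra h
    push_neg at h
    obtain ⟨ha, hb⟩ := h
    rw [huChar] at ha hb hab
    push_neg at ha hb
    apply hab
    rw [ZMod.val_add]
    exact (Nat.dvd_mod_iff (dvd_pow_self p hs.ne')).mpr (dvd_add ha hb)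
  -- 2 is a unit
  have h2 : IsUnit (2 : ZMod (p ^ s)) := by
    have := (ZMod.isUnit_iff_coprime 2 (p ^ s)).mpr
      ((Nat.coprime_pow_right_iff hs 2 p).mpr (hodd.coprime_two_left))
    simpa using this
  -- S is finite
  have hfin : S.Finite := by
    by_contra h
    rw [Set.Infinite.ncard h] at hcard
    omega
  -- unimodularity: one coordinate is a unit
  have hum : ∀ w ∈ S, IsUnit w.1 ∨ IsUnit w.2 := by
    intro w hw
    have h1 : (1 : ZMod (p ^ s)) ∈ Ideal.span {w.1, w.2} := by
      rw [huni w hw]; trivial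
    obtain ⟨a, b, hab⟩ := Ideal.mem_span_pair.mp h1
    have : IsUnit (a * w.1 + b * w.2) := hab ▸ isUnit_one
    rcases IsLocalRing.isUnit_or_isUnit_of_isUnit_add this with h | h
    · exact Or.inl (isUnit_of_mul_isUnit_right h)
    · exact Or.inr (isUnit_of_mul_isUnit_right h)
  -- three distinct elements
  obtain ⟨a, ha, b, hb, c, hc, hab, hac, hbc⟩ :=
    (Set.two_lt_ncard hfin).mp (by omega)
  -- for each v, pick two other distinct elements
  have pick : ∀ v ∈ S, ∃ y ∈ S, ∃ z ∈ S, y ≠ z ∧ y ≠ v ∧ z ≠ v := by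
    intro v hv
    rcases eq_or_ne v a with rfl | hva
    · exact ⟨b, hb, c, hc, hbc, fun h => hab h.symm, fun h => hac h.symm⟩
    rcases eq_or_ne v b with rfl | hvb
    · exact ⟨a, ha, c, hc, hac, fun h => hva h.symm, fun h => hbc h.symm⟩
    · exact ⟨a, ha, b, hb, hab, fun h => hva h.symm, fun h => hvb h.symm⟩
  -- orthogonality in product form
  have horth' : ∀ x ∈ S, ∀ y ∈ S, x ≠ y → x.1 * y.1 = x.2 * y.2 := by
    intro x hx y hy hxy
    exact sub_eq_zero.mp (horth x hx y hy hxy)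
  -- every element of S has both coordinates units
  have hU : ∀ v ∈ S, IsUnit v.1 ∧ IsUnit v.2 := by
    intro v hv
    obtain ⟨y, hy, z, hz, hyz, hyv, hzv⟩ := pick v hv
    have key : ∀ w ∈ S, w ≠ v →
        (¬IsUnit v.1 → ¬IsUnit w.2) ∧ (¬IsUnit v.2 → ¬IsUnit w.1) := by
      intro w hw hwv
      have he := horth' v hv w hw (fun h => hwv h.symm)
      constructor
      · intro h1 hw2
        have hv2 : IsUnit v.2 := (hum v hv).resolve_left h1
        exact h1 (isUnit_of_mul_isUnit_left (he ▸ hv2.mul hw2))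
      · intro h2 hw1
        have hv1 : IsUnit v.1 := (hum v hv).resolve_right h2
        exact h2 (isUnit_of_mul_isUnit_left (he.symm ▸ hv1.mul hw1))
    constructor
    · by_contra h1
      have hy2 : ¬IsUnit y.2 := (key y hy hyv).1 h1
      have hz2 : ¬IsUnit z.2 := (key z hz hzv).1 h1
      have hy1 : IsUnit y.1 := (hum y hy).resolve_right hy2
      have hz1 : IsUnit z.1 := (hum z hz).resolve_right hz2
      have he := horth' y hy z hz hyz
      exact hy2 (isUnit_of_mul_isUnit_left (he ▸ hy1.mul hz1))
    · by_contra h2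
      have hy1 : ¬IsUnit y.1 := (key y hy hyv).2 h2
      have hz1 : ¬IsUnit z.1 := (key z hz hzv).2 h2
      have hy2 : IsUnit y.2 := (hum y hy).resolve_left hy1
      have hz2 : IsUnit z.2 := (hum z hz).resolve_left hz1
      have he := horth' y hy z hz hyz
      exact hy1 (isUnit_of_mul_isUnit_left (he.symm ▸ hy2.mul hz2))
  -- each element is on one of the two diagonals
  have hpm : ∀ v ∈ S, v.1 = v.2 ∨ v.1 = -v.2 := by
    intro v hv
    obtain ⟨y, hy, z, hz, hyz, hyv, hzv⟩ := pick v hv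
    have e1 := horth' v hv y hy (fun h => hyv h.symm)
    have e2 := horth' v hv z hz (fun h => hzv h.symm)
    have e3 := horth' y hy z hz hyz
    have hu : IsUnit (y.1 * z.1) := ((hU y hy).1).mul ((hU z hz).1)
    have hsq : v.1 ^ 2 = v.2 ^ 2 := by
      apply hu.mul_right_cancel
      linear_combination v.1 * z.1 * e1 + v.2 * y.2 * e2 - v.2 ^ 2 * e3
    have hprod : (v.1 - v.2) * (v.1 + v.2) = 0 := by linear_combination hsq
    have h2v : IsUnit ((v.1 - v.2) + (v.1 + v.2)) := by
      have : (v.1 - v.2) + (v.1 + v.2) = 2 * v.1 := by ring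
      rw [this]
      exact h2.mul (hU v hv).1
    rcases IsLocalRing.isUnit_or_isUnit_of_isUnit_add h2v with h | h
    · right
      have h0 : v.1 + v.2 = 0 := by
        have := hprod
        rw [mul_comm] at this
        exact (h.mul_left_eq_zero).mp this
      exact eq_neg_of_add_eq_zero_left h0
    · left
      exact sub_eq_zero.mp ((h.mul_left_eq_zero).mp hprod)
  -- consistency: not both diagonals occur
  by_cases hall : ∀ v ∈ S, v.1 = v.2
  · left
    intro v hv
    exact ⟨v.2, (hU v hv).2, Prod.ext (hall v hv) rfl⟩
  · right
    push_neg at hall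
    obtain ⟨w, hw, hw12⟩ := hall
    have hwm : w.1 = -w.2 := (hpm w hw).resolve_left hw12
    intro v hv
    rcases hpm v hv with h | h
    · exfalso
      have hvw : v ≠ w := by
        intro h'
        subst h'
        exact hw12 h
      have he := horth' v hv w hw hvw
      rw [h, hwm] at he
      have hz0 : (2 : ZMod (p ^ s)) * (v.2 * w.2) = 0 := by linear_combination -he
      exact (h2.mul ((hU v hv).2.mul (hU w hw).2)).ne_zero hz0
    · exact ⟨v.2, (hU v hv).2, Prod.ext h rfl⟩
end
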